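/- Let ℰ be a quantum channel on ℂ^d. Suppose there exist M density matrices ρ_1,…,ρ_M on ℂ^d and a POVM {E_j}_{j∈J} on ℂ^d such that the output states ℰ(ρ_a) and ℰ(ρ_b) are non-adjacent under {E_j}_{j∈J} for every pair a ≠ b. Then for every n ≥ 1 there is a zero-error quantum block code of length n and size M^n for ℰ (so K(n) ≥ M^n), and consequently the zero-error capacity satisfies C⁰(ℰ) ≥ log M. -/

import Mathlib

open Matrix BigOperators ComplexOrder

/-- `d × d` complex matrices. -/
abbrev Mat (d : ℕ) : Type := Matrix (Fin d) (Fin d) ℂ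

/-- A density matrix: positive semidefinite with trace 1. -/
def IsDensityMatrix {d : ℕ} (ρ : Mat d) : Prop :=
  ρ.PosSemidef ∧ ρ.trace = 1

/-- A POVM with (finite) outcome set `Fin N`. -/
def IsPOVM {d N : ℕ} (E : Fin N → Mat d) : Prop :=
  (∀ j, (E j).PosSemidef) ∧ ∑ j, E j = 1

/-- A quantum channel: linear, trace preserving, positivity preserving. -/
def IsQuantumChannel {d : ℕ} (ℰ : Mat d →ₗ[ℂ] Mat d) : Prop :=
  (∀ ρ, (ℰ ρ).trace = ρ.trace) ∧ (∀ ρ : Mat d, ρ.PosSemidef → (ℰ ρ).PosSemidef)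

/-- Probability of measurement outcome with effect `E` on state `σ`: `tr (σ E)`. -/
noncomputable def prob {d : ℕ} (σ E : Mat d) : ℝ := (Matrix.trace (σ * E)).re

/-- Two states are non-adjacent under a POVM if no outcome has positive
probability for both. -/
def NonAdjacent {d N : ℕ} (σa σb : Mat d) (E : Fin N → Mat d) : Prop :=
  ∀ j, ¬ (0 < prob σa (E j) ∧ 0 < prob σb (E j))

/-- The `n`-fold Kronecker product of `d × d` matrices, as a `d^n × d^n` matrix
(identifying `(ℂ^d)^{⊗n}` with `ℂ^{d^n}`). -/
def kronPow {d n : ℕ} (M : Fin n → Mat d) : Mat (d ^ n) :=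
  Matrix.of fun x y =>
    ∏ i, M i (finFunctionFinEquiv.symm x i) (finFunctionFinEquiv.symm y i)

/-- There is a zero-error quantum block code of length `n` and size `K` for `ℰ`. -/
def CodeExists {d : ℕ} (ℰ : Mat d →ₗ[ℂ] Mat d) (n K : ℕ) : Prop :=
  ∃ (ρ : Fin K → Fin n → Mat d) (N : ℕ) (E : Fin N → Mat (d ^ n)) (g : Fin N → Fin K),
    (∀ k i, IsDensityMatrix (ρ k i)) ∧ IsPOVM E ∧
    ∀ k j, 0 < prob (kronPow fun i => ℰ (ρ k i)) (E j) → g j = k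

/-- `K(n)`: the largest size of a zero-error quantum block code of length `n`. -/
noncomputable def maxK {d : ℕ} (ℰ : Mat d →ₗ[ℂ] Mat d) (n : ℕ) : ℕ :=
  sSup {K | CodeExists ℰ n K}

/-- The zero-error capacity `C⁰(ℰ) = sup_n (1/n) log K(n)`. -/
noncomputable def C0 {d : ℕ} (ℰ : Mat d →ₗ[ℂ] Mat d) : ℝ :=
  ⨆ n : ℕ+, Real.log (maxK ℰ (n : ℕ)) / (n : ℝ)

lemma kronPow_conjTranspose {d n : ℕ} (M : Fin n → Mat d) :
    (kronPow M)ᴴ = kronPow (fun i => (M i)ᴴ) := by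
  ext x y
  simp only [kronPow, conjTranspose_apply, of_apply]
  rw [star_prod]

lemma kronPow_mul {d n : ℕ} (A B : Fin n → Mat d) :
    kronPow A * kronPow B = kronPow (fun i => A i * B i) := by
  ext x y
  simp only [kronPow, mul_apply, of_apply]
  rw [← Equiv.sum_comp (finFunctionFinEquiv (m := d) (n := n))]
  simp only [Equiv.symm_apply_apply, ← Finset.prod_mul_distrib]
  exact (Fintype.prod_sum (R := ℂ) (κ := fun _ : Fin n => Fin d)
    (fun i j => A i (finFunctionFinEquiv.symm x i) j * B i j (finFunctionFinEquiv.symm y i))).symm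

lemma kronPow_trace {d n : ℕ} (M : Fin n → Mat d) :
    (kronPow M).trace = ∏ i, (M i).trace := by
  simp only [Matrix.trace, Matrix.diag, kronPow, of_apply]
  rw [← Equiv.sum_comp (finFunctionFinEquiv (m := d) (n := n))]
  simp only [Equiv.symm_apply_apply]
  exact (Fintype.prod_sum (R := ℂ) (κ := fun _ : Fin n => Fin d) (fun i j => M i j j)).symm

lemma kronPow_one {d n : ℕ} : kronPow (fun _ : Fin n => (1 : Mat d)) = 1 := by
  ext x y
  by_cases hxy : x = y
  · subst hxy
    simp [kronPow, Matrix.one_apply]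
  · rw [Matrix.one_apply_ne hxy]
    have : ∃ i, finFunctionFinEquiv.symm x i ≠ finFunctionFinEquiv.symm y i := by
      by_contra hc
      push_neg at hc
      exact hxy (finFunctionFinEquiv.symm.injective (funext hc))
    obtain ⟨i, hi⟩ := this
    exact Finset.prod_eq_zero (Finset.mem_univ i) (Matrix.one_apply_ne hi)

lemma kronPow_sum {d n N : ℕ} (E : Fin N → Mat d) :
    ∑ f : Fin n → Fin N, kronPow (fun i => E (f i)) = kronPow (fun _ => ∑ j, E j) := by
  ext x y
  simp only [Finset.sum_apply, kronPow, of_apply, Matrix.sum_apply]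
  exact (Fintype.prod_sum (R := ℂ) (κ := fun _ : Fin n => Fin N)
    (fun i c => E c (finFunctionFinEquiv.symm x i) (finFunctionFinEquiv.symm y i))).symm

section
open scoped MatrixOrder
lemma posSemidef_iff_eq_transpose_mul_self {d : ℕ} {A : Mat d} :
    A.PosSemidef ↔ ∃ B : Mat d, A = Bᴴ * B := by
  constructor
  · intro hA
    obtain ⟨B, hB⟩ := CStarAlgebra.nonneg_iff_eq_star_mul_self.mp hA.nonneg
    exact ⟨B, hB⟩
  · rintro ⟨B, rfl⟩
    exact posSemidef_conjTranspose_mul_self B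
end

lemma kronPow_posSemidef {d n : ℕ} {M : Fin n → Mat d} (h : ∀ i, (M i).PosSemidef) :
    (kronPow M).PosSemidef := by
  choose B hB using fun i => (posSemidef_iff_eq_transpose_mul_self.mp (h i))
  rw [posSemidef_iff_eq_transpose_mul_self]
  refine ⟨kronPow B, ?_⟩
  rw [kronPow_conjTranspose, kronPow_mul]
  exact congrArg _ (funext fun i => hB i)

lemma trace_psd_nonneg {d : ℕ} {A : Mat d} (hA : A.PosSemidef) : 0 ≤ A.trace := by
  obtain ⟨C, rfl⟩ := posSemidef_iff_eq_transpose_mul_self.mp hA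
  simp only [Matrix.trace, Matrix.diag, Matrix.mul_apply, conjTranspose_apply]
  exact Finset.sum_nonneg fun i _ => Finset.sum_nonneg fun k _ => star_mul_self_nonneg _

lemma trace_mul_psd_nonneg {d : ℕ} {A B : Mat d} (hA : A.PosSemidef) (hB : B.PosSemidef) :
    0 ≤ (A * B).trace := by
  obtain ⟨C, rfl⟩ := posSemidef_iff_eq_transpose_mul_self.mp hB
  rw [← Matrix.mul_assoc, Matrix.trace_mul_cycle]
  exact trace_psd_nonneg (hA.mul_mul_conjTranspose_same C)

lemma trace_eq_re {d : ℕ} {A B : Mat d} (hA : A.PosSemidef) (hB : B.PosSemidef) :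
    (A * B).trace = ((prob A B : ℝ) : ℂ) := by
  have h := trace_mul_psd_nonneg hA hB
  rw [Complex.nonneg_iff] at h
  exact Complex.ext rfl h.2.symm

lemma prob_nonneg {d : ℕ} {A B : Mat d} (hA : A.PosSemidef) (hB : B.PosSemidef) :
    0 ≤ prob A B := by
  have h := trace_mul_psd_nonneg hA hB
  rw [Complex.nonneg_iff] at h
  exact h.1

lemma prob_kronPow {d n : ℕ} {A B : Fin n → Mat d}
    (hA : ∀ i, (A i).PosSemidef) (hB : ∀ i, (B i).PosSemidef) :
    prob (kronPow A) (kronPow B) = ∏ i, prob (A i) (B i) := by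
  unfold prob
  rw [kronPow_mul, kronPow_trace]
  have : (∏ i, (A i * B i).trace) = ((∏ i, prob (A i) (B i) : ℝ) : ℂ) := by
    rw [Complex.ofReal_prod]
    exact Finset.prod_congr rfl fun i _ => trace_eq_re (hA i) (hB i)
  rw [this, Complex.ofReal_re]
  rfl

/-- A density matrix is below the identity. -/
lemma one_sub_posSemidef {d : ℕ} {σ : Mat d} (hσ : σ.PosSemidef) (ht : σ.trace = 1) :
    (1 - σ).PosSemidef := by
  have hH := hσ.1
  have hspec := hH.spectral_theorem
  rw [Unitary.conjStarAlgAut_apply] at hspec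
  set U : Mat d := (hH.eigenvectorUnitary : Mat d) with hU
  have hUU : U * star U = 1 := (Matrix.mem_unitaryGroup_iff).mp hH.eigenvectorUnitary.2
  have hUU' : star U * U = 1 := (Matrix.mem_unitaryGroup_iff').mp hH.eigenvectorUnitary.2
  have htr : ∑ i, hH.eigenvalues i = 1 := by
    have h2 := congrArg Matrix.trace hspec
    rw [Matrix.trace_mul_cycle, hUU', Matrix.one_mul, ht] at h2
    have h3 : ((∑ i, hH.eigenvalues i : ℝ) : ℂ) = 1 := by
      rw [Complex.ofReal_sum, h2, Matrix.trace_diagonal]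
      rfl
    exact_mod_cast h3
  have hle : ∀ i, hH.eigenvalues i ≤ 1 := by
    intro i
    rw [← htr]
    exact Finset.single_le_sum (fun j _ => hσ.eigenvalues_nonneg j) (Finset.mem_univ i)
  have hD : Matrix.diagonal (fun i => ((1 - hH.eigenvalues i : ℝ) : ℂ))
      = 1 - Matrix.diagonal (RCLike.ofReal ∘ hH.eigenvalues) := by
    have hfun : (fun i => ((1 - hH.eigenvalues i : ℝ) : ℂ))
        = fun i => (1 : ℂ) - (RCLike.ofReal ∘ hH.eigenvalues) i := by
      funext i
      push_cast
      rfl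
    rw [hfun]
    ext i j
    by_cases hij : i = j
    · subst hij
      simp [Matrix.diagonal_apply_eq]
    · simp [Matrix.diagonal_apply_ne _ hij, Matrix.one_apply_ne hij]
  have key : U * Matrix.diagonal (fun i => ((1 - hH.eigenvalues i : ℝ) : ℂ)) * star U
      = 1 - σ := by
    rw [hD, Matrix.mul_sub, Matrix.sub_mul, Matrix.mul_one, hUU, ← hspec]
  rw [← key]
  refine Matrix.PosSemidef.mul_mul_conjTranspose_same ?_ U
  refine Matrix.posSemidef_diagonal_iff.mpr fun i => ?_
  rw [Complex.le_def]
  refine ⟨by simpa using sub_nonneg.mpr (hle i), by simp⟩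

lemma sum_psd {D : ℕ} {ι : Type*} {s : Finset ι} {F : ι → Mat D}
    (h : ∀ j ∈ s, (F j).PosSemidef) : (∑ j ∈ s, F j).PosSemidef :=
  Finset.sum_induction F Matrix.PosSemidef (fun _ _ ha hb => ha.add hb)
    Matrix.PosSemidef.zero h

lemma codeExists_bound {d : ℕ} (hd : 0 < d) {ℰ : Mat d →ₗ[ℂ] Mat d}
    (hℰ : IsQuantumChannel ℰ) {n K : ℕ} (hC : CodeExists ℰ n K) : K ≤ d ^ n := by
  classical
  obtain ⟨ρ, N', E, g, hρ, ⟨hEpsd, hEsum⟩, hzero⟩ := hC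
  set σ : Fin K → Mat (d ^ n) := fun k => kronPow fun i => ℰ (ρ k i) with hσdef
  have hσpsd : ∀ k, (σ k).PosSemidef := fun k =>
    kronPow_posSemidef fun i => hℰ.2 _ (hρ k i).1
  have hσtr : ∀ k, (σ k).trace = 1 := by
    intro k
    rw [hσdef]
    rw [kronPow_trace, Finset.prod_congr rfl fun i _ => (hℰ.1 (ρ k i)).trans (hρ k i).2]
    simp
  have hzero' : ∀ k j, g j ≠ k → ((σ k) * E j).trace = 0 := by
    intro k j hgj
    have h0 := trace_mul_psd_nonneg (hσpsd k) (hEpsd j)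
    rw [Complex.nonneg_iff] at h0
    have hnot : ¬ 0 < prob (σ k) (E j) := fun hpos => hgj (hzero k j hpos)
    have hre : prob (σ k) (E j) = 0 := le_antisymm (not_lt.mp hnot) h0.1
    exact Complex.ext hre h0.2.symm
  set F : Fin K → Mat (d ^ n) := fun k => ∑ j ∈ Finset.univ.filter (fun j => g j = k), E j
    with hF
  have hFpsd : ∀ k, (F k).PosSemidef := fun k => sum_psd (fun j _ => hEpsd j)
  have h1 : ∀ k, ((σ k) * F k).trace = 1 := by
    intro k
    have e1 : ((σ k) * F k).trace
        = ∑ j ∈ Finset.univ.filter (fun j => g j = k), ((σ k) * E j).trace := by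
      rw [hF, Finset.mul_sum, Matrix.trace_sum]
    have e2 : ∑ j ∈ Finset.univ.filter (fun j => g j = k), ((σ k) * E j).trace
        = ∑ j, ((σ k) * E j).trace := by
      refine Finset.sum_subset (Finset.filter_subset _ _) ?_
      intro j _ hj
      simp only [Finset.mem_filter, Finset.mem_univ, true_and] at hj
      exact hzero' k j hj
    rw [e1, e2, ← Matrix.trace_sum, ← Finset.mul_sum, hEsum, mul_one, hσtr]
  have hle1 : ∀ k, (1 : ℝ) ≤ ((F k).trace).re := by
    intro k
    have hsub := trace_mul_psd_nonneg (one_sub_posSemidef (hσpsd k) (hσtr k)) (hFpsd k)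
    rw [Matrix.sub_mul, Matrix.one_mul, Matrix.trace_sub, Complex.nonneg_iff] at hsub
    have := hsub.1
    rw [Complex.sub_re, h1 k] at this
    simp only [Complex.one_re] at this
    linarith
  have hKle : (K : ℝ) ≤ (d ^ n : ℕ) := by
    have hsumF : ∑ k, F k = 1 := by
      rw [hF]
      rw [Finset.sum_fiberwise Finset.univ g E]
      exact hEsum
    calc (K : ℝ) = ∑ _k : Fin K, (1 : ℝ) := by simp
      _ ≤ ∑ k, ((F k).trace).re := Finset.sum_le_sum fun k _ => hle1 k
      _ = ((∑ k, F k).trace).re := by rw [Matrix.trace_sum, Complex.re_sum]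
      _ = (d ^ n : ℕ) := by
          rw [hsumF, Matrix.trace_one]
          simp only [Fintype.card_fin]
          rw [Complex.natCast_re]
  exact_mod_cast hKle

lemma codeExists_one {d : ℕ} (ℰ : Mat d →ₗ[ℂ] Mat d) {ρ0 : Mat d}
    (h0 : IsDensityMatrix ρ0) (n : ℕ) : CodeExists ℰ n 1 := by
  refine ⟨fun _ _ => ρ0, 1, fun _ => 1, fun _ => 0, fun _ _ => h0,
    ⟨fun _ => Matrix.PosSemidef.one, by simp⟩, fun k j _ => Subsingleton.elim _ _⟩

lemma codeExists_pow {d M N : ℕ} (hM : 1 ≤ M)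
    (ℰ : Mat d →ₗ[ℂ] Mat d) (hℰ : IsQuantumChannel ℰ)
    (ρ : Fin M → Mat d) (hρ : ∀ a, IsDensityMatrix (ρ a))
    (E : Fin N → Mat d) (hE : IsPOVM E)
    (h : ∀ a b, a ≠ b → NonAdjacent (ℰ (ρ a)) (ℰ (ρ b)) E)
    (n : ℕ) : CodeExists ℰ n (M ^ n) := by
  classical
  set g0 : Fin N → Fin M := fun j =>
    if hj : ∃ a, 0 < prob (ℰ (ρ a)) (E j) then hj.choose else ⟨0, hM⟩ with hg0def
  have hg0 : ∀ j a, 0 < prob (ℰ (ρ a)) (E j) → g0 j = a := by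
    intro j a ha
    have hex : ∃ a, 0 < prob (ℰ (ρ a)) (E j) := ⟨a, ha⟩
    rw [hg0def]
    simp only [dif_pos hex]
    by_contra hne
    exact (h _ _ hne j) ⟨hex.choose_spec, ha⟩
  refine ⟨fun k i => ρ (finFunctionFinEquiv.symm k i), N ^ n,
    fun j => kronPow (fun i => E (finFunctionFinEquiv.symm j i)),
    fun j => finFunctionFinEquiv (fun i => g0 (finFunctionFinEquiv.symm j i)),
    fun k i => hρ _, ⟨fun j => kronPow_posSemidef fun i => hE.1 _, ?_⟩, ?_⟩
  · rw [← Equiv.sum_comp (finFunctionFinEquiv (m := N) (n := n))]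
    simp only [Equiv.symm_apply_apply]
    rw [kronPow_sum E, hE.2, kronPow_one]
  · intro k j hpos
    rw [prob_kronPow (fun i => hℰ.2 _ (hρ _).1) (fun i => hE.1 _)] at hpos
    have hfac : ∀ i, 0 < prob (ℰ (ρ (finFunctionFinEquiv.symm k i)))
        (E (finFunctionFinEquiv.symm j i)) := by
      intro i
      rcases (prob_nonneg (hℰ.2 _ (hρ _).1) (hE.1 _)).lt_or_eq with h' | h'
      · exact h'
      · exfalso
        have hz := Finset.prod_eq_zero (f := fun i => prob
          (ℰ (ρ (finFunctionFinEquiv.symm k i))) (E (finFunctionFinEquiv.symm j i)))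
          (Finset.mem_univ i) h'.symm
        rw [hz] at hpos
        exact lt_irrefl _ hpos
    have hfun : (fun i => g0 (finFunctionFinEquiv.symm j i)) = finFunctionFinEquiv.symm k :=
      funext fun i => hg0 _ _ (hfac i)
    show finFunctionFinEquiv (fun i => g0 (finFunctionFinEquiv.symm j i)) = k
    rw [hfun, Equiv.apply_symm_apply]

/-- **Theorem.** If `M` input states have pairwise non-adjacent channel outputs
under a single POVM, then `K(n) ≥ M^n` for every `n ≥ 1` and `C⁰(ℰ) ≥ log M`. -/
theorem capacity_ge_log_of_pairwise_nonAdjacent {d M N : ℕ} (hM : 1 ≤ M)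
    (ℰ : Mat d →ₗ[ℂ] Mat d) (hℰ : IsQuantumChannel ℰ)
    (ρ : Fin M → Mat d) (hρ : ∀ a, IsDensityMatrix (ρ a))
    (E : Fin N → Mat d) (hE : IsPOVM E)
    (h : ∀ a b, a ≠ b → NonAdjacent (ℰ (ρ a)) (ℰ (ρ b)) E) :
    (∀ n, 1 ≤ n → CodeExists ℰ n (M ^ n) ∧ M ^ n ≤ maxK ℰ n) ∧
      Real.log M ≤ C0 ℰ := by
  have hd : 0 < d := by
    rcases Nat.eq_zero_or_pos d with rfl | hd
    · have h1 := (hρ ⟨0, hM⟩).2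
      have h0 : (ρ ⟨0, hM⟩).trace = 0 := by
        simp [Matrix.trace]
      rw [h0] at h1
      exact absurd h1 (by norm_num)
    · exact hd
  have key : ∀ n : ℕ, CodeExists ℰ n (M ^ n) := codeExists_pow hM ℰ hℰ ρ hρ E hE h
  have hbdd : ∀ n K, CodeExists ℰ n K → K ≤ d ^ n := fun n K hK =>
    codeExists_bound hd hℰ hK
  have hmax : ∀ n : ℕ, M ^ n ≤ maxK ℰ n := fun n =>
    le_csSup ⟨d ^ n, fun K hK => hbdd n K hK⟩ (key n)
  have hmaxle : ∀ n : ℕ, maxK ℰ n ≤ d ^ n := fun n =>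
    csSup_le ⟨M ^ n, key n⟩ (fun K hK => hbdd n K hK)
  refine ⟨fun n _ => ⟨key n, hmax n⟩, ?_⟩
  have hdlog : (0 : ℝ) ≤ Real.log d := Real.log_nonneg (by exact_mod_cast hd)
  have hub : ∀ m : ℕ+, Real.log (maxK ℰ (m : ℕ)) / (m : ℝ) ≤ Real.log d := by
    intro m
    have hmpos : (0 : ℝ) < (m : ℕ) := by exact_mod_cast m.pos
    rw [div_le_iff₀ hmpos]
    have h1 : Real.log (maxK ℰ (m : ℕ)) ≤ (m : ℕ) * Real.log d := by
      rcases Nat.eq_zero_or_pos (maxK ℰ (m : ℕ)) with h0 | hpos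
      · rw [h0]
        simp only [Nat.cast_zero, Real.log_zero]
        positivity
      · calc Real.log (maxK ℰ (m : ℕ)) ≤ Real.log ((d : ℝ) ^ (m : ℕ)) := by
              rw [Real.log_le_log_iff (by exact_mod_cast hpos) (by positivity)]
              exact_mod_cast hmaxle (m : ℕ)
          _ = (m : ℕ) * Real.log d := Real.log_pow _ _
    linarith
  have hbddA : BddAbove (Set.range fun m : ℕ+ => Real.log (maxK ℰ (m : ℕ)) / (m : ℝ)) := by
    refine ⟨Real.log d, ?_⟩
    rintro x ⟨m, rfl⟩
    exact hub m
  have hone : Real.log M ≤ Real.log (maxK ℰ ((1 : ℕ+) : ℕ)) / ((1 : ℕ+) : ℝ) := by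
    have hM1 : M ≤ maxK ℰ 1 := by
      have := hmax 1
      rwa [pow_one] at this
    simp only [PNat.one_coe, Nat.cast_one, div_one]
    rw [Real.log_le_log_iff (by exact_mod_cast hM)
      (by exact_mod_cast lt_of_lt_of_le hM hM1)]
    exact_mod_cast hM1
  exact hone.trans (le_ciSup hbddA 1)
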